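/- arXiv:1805.02136 — 3 statements merged into one kernel-verified Lean document; each statement's English description precedes it below -/
import Mathlib

section
/- Let ε > 0, δ > 0 and let L ≥ 2 be an integer with 2ε < δ ≤ 1/L. Then N*(ε,δ,L) ≤ ⌈log(1/(Lε))⌉ + 2L; that is, there exist a seed-space size 𝒴 and an (ε,δ,L)-private learner strategy of length ⌈log(1/(Lε))⌉ + 2L. -/
open Set

/-- A learner strategy of length `N` with seed space `Fin Y` (representing `{1,…,𝒴}`):
query functions mapping previous responses and the seed to a query in `[0,1)`,
and an estimation function mapping all responses and the seed to an estimate in `[0,1)`. -/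
structure Strategy (N Y : ℕ) where
  query : (k : Fin N) → (Fin (k : ℕ) → Bool) → Fin Y → ℝ
  estimate : (Fin N → Bool) → Fin Y → ℝ
  query_mem : ∀ k h y, query k h y ∈ Set.Ico (0 : ℝ) 1
  estimate_mem : ∀ r y, estimate r y ∈ Set.Ico (0 : ℝ) 1

namespace Strategy

variable {N Y : ℕ}

/-- The first `k` responses when the true value is `x` and the seed is `y`:
`r_k = 1` iff `x ≥ q_k`. -/
noncomputable def resps (φ : Strategy N Y) (x : ℝ) (y : Fin Y) : (k : ℕ) → Fin k → Bool
  | 0 => Fin.elim0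
  | k + 1 => fun i =>
      if h : (i : ℕ) < k then resps φ x y k ⟨i, h⟩
      else if hk : k < N then decide (φ.query ⟨k, hk⟩ (resps φ x y k) y ≤ x)
      else false

/-- The query sequence `q̄(x,y)`. -/
noncomputable def queries (φ : Strategy N Y) (x : ℝ) (y : Fin Y) : Fin N → ℝ :=
  fun k => φ.query k (resps φ x y (k : ℕ)) y

/-- The learner's estimate `x̂(x,y)`. -/
noncomputable def estim (φ : Strategy N Y) (x : ℝ) (y : Fin Y) : ℝ :=
  φ.estimate (resps φ x y N) y

/-- `Q(x)`: the set of query sequences that can arise when the true value is `x`. -/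
def Q (φ : Strategy N Y) (x : ℝ) : Set (Fin N → ℝ) :=
  {q | ∃ y : Fin Y, φ.queries x y = q}

/-- The information set `I(q̄)` of the adversary. -/
def infoSet (φ : Strategy N Y) (q : Fin N → ℝ) : Set ℝ :=
  {x | x ∈ Set.Ico (0 : ℝ) 1 ∧ q ∈ φ.Q x}

/-- The accuracy constraint with parameter `ε`. -/
def Accurate (ε : ℝ) (φ : Strategy N Y) : Prop :=
  ∀ x ∈ Set.Ico (0 : ℝ) 1, ∀ y : Fin Y, |φ.estim x y - x| ≤ ε / 2

end Strategy

/-- `E` is `(δ,L)`-coverable: `E` is contained in the union of `L` closed intervals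
of length at most `δ` each. -/
def Coverable (δ : ℝ) (L : ℕ) (E : Set ℝ) : Prop :=
  ∃ a b : Fin L → ℝ, (∀ j, b j - a j ≤ δ) ∧ E ⊆ ⋃ j, Set.Icc (a j) (b j)

/-- The `δ`-cover number `C_δ(E)`: the least positive `L` such that `E` is `(δ,L)`-coverable. -/
noncomputable def coverNumber (δ : ℝ) (E : Set ℝ) : ℕ :=
  sInf {L : ℕ | 0 < L ∧ Coverable δ L E}

/-- An `(ε,δ,L)`-private learner strategy. -/
def IsPrivate (ε δ : ℝ) (L : ℕ) {N Y : ℕ} (φ : Strategy N Y) : Prop :=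
  φ.Accurate ε ∧ ∀ x ∈ Set.Ico (0 : ℝ) 1, ∀ q ∈ φ.Q x, L ≤ coverNumber δ (φ.infoSet q)

/-- `N*(ε,δ,L)`: the least length for which an `(ε,δ,L)`-private strategy exists. -/
noncomputable def Nstar (ε δ : ℝ) (L : ℕ) : ℕ :=
  sInf {N : ℕ | ∃ Y : ℕ, 0 < Y ∧ ∃ φ : Strategy N Y, IsPrivate ε δ L φ}

/-!
The strategy spends its first `2L` queries on the fixed pairs `j/L`, `j/L + ε` (`j < L`). The
responses locate the cell `[c/L, (c+1)/L)` of `x` and tell whether `x` lies in the pair interval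
`[c/L, c/L + ε)`, where `c/L + ε/2` is already an `ε/2`-estimate. Otherwise `x` lies in the gap
`[c/L + ε, (c+1)/L)`, of length below `1/L`, and `M ≥ log (1/(Lε))` bisection steps narrow it to
precision `ε`. In the first case the last `M` queries are a decoy: a bisection path whose gap and
bits are named by the seed. So every query sequence is a bisection path in some gap,
and every point of every pair interval produces it for a suitable seed; the information set thus
contains `L` points more than `1/L ≥ δ` apart, and its `δ`-cover number is at least `L`.
-/

namespace Strategy

variable {N : ℕ} {σ : Type*} [Fintype σ]

def pad {k : ℕ} (h : Fin k → Bool) (n : ℕ) : Bool :=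
  if hn : n < k then h ⟨n, hn⟩ else false

lemma pad_of_lt {k : ℕ} (h : Fin k → Bool) {n : ℕ} (hn : n < k) : pad h n = h ⟨n, hn⟩ :=
  dif_pos hn

def IsCausal (F : (ℕ → Bool) → ℕ → ℝ) : Prop :=
  ∀ h h' n, (∀ i < n, h i = h' i) → F h n = F h' n

noncomputable def ofRule (F : σ → (ℕ → Bool) → ℕ → ℝ) (E : σ → (ℕ → Bool) → ℝ)
    (hF : ∀ s h n, F s h n ∈ Ico (0 : ℝ) 1) (hE : ∀ s h, E s h ∈ Ico (0 : ℝ) 1) :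
    Strategy N (Fintype.card σ) where
  query k h y := F ((Fintype.equivFin σ).symm y) (pad h) k
  estimate r y := E ((Fintype.equivFin σ).symm y) (pad r)
  query_mem _ _ _ := hF _ _ _
  estimate_mem _ _ := hE _ _

section ofRule

variable {F : σ → (ℕ → Bool) → ℕ → ℝ} {E : σ → (ℕ → Bool) → ℝ}
  {hF : ∀ s h n, F s h n ∈ Ico (0 : ℝ) 1} {hE : ∀ s h, E s h ∈ Ico (0 : ℝ) 1}
  {x : ℝ} {s : σ} {r : ℕ → Bool}

lemma query_ofRule (k : Fin N) (h : Fin k → Bool) :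
    (ofRule F E hF hE : Strategy N _).query k h (Fintype.equivFin σ s) = F s (pad h) k := by
  simp [ofRule]

lemma resps_ofRule (hcausal : IsCausal (F s)) (hr : ∀ n < N, r n = decide (F s r n ≤ x)) :
    ∀ m ≤ N, ∀ i : Fin m,
      (ofRule F E hF hE : Strategy N _).resps x (Fintype.equivFin σ s) m i = r i := by
  intro m
  induction m with
  | zero => intro _ i; exact i.elim0
  | succ m ih =>
    intro hm i
    have hpad : ∀ j < m,
        pad ((ofRule F E hF hE : Strategy N _).resps x (Fintype.equivFin σ s) m) j = r j :=
      fun j hj => by rw [pad_of_lt _ hj, ih (by omega)]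
    have hmN : m < N := hm
    obtain ⟨i, him⟩ := i
    by_cases hi : i < m
    · simp only [resps, dif_pos hi]
      exact ih hmN.le _
    · obtain rfl : i = m := by omega
      simp only [resps, dif_neg hi, dif_pos hmN, query_ofRule, hr i hmN]
      rw [hcausal _ _ _ hpad]

lemma estimate_ofRule (h : Fin N → Bool) :
    (ofRule F E hF hE : Strategy N _).estimate h (Fintype.equivFin σ s) = E s (pad h) := by
  simp [ofRule]

lemma pad_resps_ofRule (hcausal : IsCausal (F s)) (hr : ∀ n < N, r n = decide (F s r n ≤ x))
    {m : ℕ} (hm : m ≤ N) :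
    ∀ i < m, pad ((ofRule F E hF hE : Strategy N _).resps x (Fintype.equivFin σ s) m) i = r i :=
  fun i hi => by rw [pad_of_lt _ hi, resps_ofRule hcausal hr m hm]

lemma queries_ofRule (hcausal : IsCausal (F s)) (hr : ∀ n < N, r n = decide (F s r n ≤ x)) :
    (ofRule F E hF hE : Strategy N _).queries x (Fintype.equivFin σ s)
      = fun k : Fin N => F s r k := by
  funext k
  rw [queries, query_ofRule, hcausal _ _ _ (pad_resps_ofRule hcausal hr k.2.le)]

lemma estim_ofRule (hcausal : IsCausal (F s)) (hr : ∀ n < N, r n = decide (F s r n ≤ x))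
    (hlocal : ∀ h h' : ℕ → Bool, (∀ i < N, h i = h' i) → E s h = E s h') :
    (ofRule F E hF hE : Strategy N _).estim x (Fintype.equivFin σ s) = E s r := by
  rw [estim, estimate_ofRule, hlocal _ _ (pad_resps_ofRule hcausal hr le_rfl)]

lemma Q_ofRule {r : σ → ℕ → Bool} (hcausal : ∀ s, IsCausal (F s))
    (hr : ∀ s, ∀ n < N, r s n = decide (F s (r s) n ≤ x)) :
    (ofRule F E hF hE : Strategy N _).Q x = range fun s (k : Fin N) => F s (r s) k := by
  ext q
  constructor
  · rintro ⟨y, rfl⟩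
    obtain ⟨s, rfl⟩ := (Fintype.equivFin σ).surjective y
    exact ⟨s, (queries_ofRule (hcausal s) (hr s)).symm⟩
  · rintro ⟨s, rfl⟩
    exact ⟨Fintype.equivFin σ s, queries_ofRule (hcausal s) (hr s)⟩

end ofRule

end Strategy

section CoverNumber

variable {δ : ℝ} {E : Set ℝ}

lemma Coverable.mono {F : Set ℝ} {n : ℕ} (hF : Coverable δ n F) (hEF : E ⊆ F) :
    Coverable δ n E := by
  obtain ⟨a, b, hlen, hcov⟩ := hF
  exact ⟨a, b, hlen, hEF.trans hcov⟩

lemma coverable_Ico (hδ : 0 < δ) (a : ℝ) (n : ℕ) : Coverable δ n (Ico a (a + n * δ)) := by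
  refine ⟨fun i => a + i * δ, fun i => a + i * δ + δ, fun _ => by simp, fun z hz => ?_⟩
  have hq : 0 ≤ (z - a) / δ := div_nonneg (by linarith [hz.1]) hδ.le
  have hlt : ⌊(z - a) / δ⌋₊ < n := by
    rw [Nat.floor_lt hq, div_lt_iff₀ hδ]
    linarith [hz.2]
  refine mem_iUnion.2 ⟨⟨_, hlt⟩, ?_, ?_⟩
  · have := Nat.floor_le hq
    rw [le_div_iff₀ hδ] at this
    dsimp only
    linarith
  · have := Nat.lt_floor_add_one ((z - a) / δ)
    rw [div_lt_iff₀ hδ] at this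
    dsimp only
    linarith

lemma Coverable.le_of_separated {n L : ℕ} (hE : Coverable δ n E) (ξ : Fin L → ℝ)
    (hξ : ∀ j, ξ j ∈ E) (hsep : Pairwise fun j j' => δ < |ξ j - ξ j'|) : L ≤ n := by
  obtain ⟨a, b, hlen, hcov⟩ := hE
  choose f hf using fun j => mem_iUnion.1 (hcov (hξ j))
  refine Fin.le_of_injective f fun j j' hjj' => by_contra fun hne => ?_
  have h := hf j
  have h' := hf j'
  rw [hjj'] at h
  have := hlen (f j')
  exact (hsep hne).not_ge (abs_le.2 ⟨by linarith [h.1, h'.2], by linarith [h.2, h'.1]⟩)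

lemma le_coverNumber_of_separated (hδ : 0 < δ) {a b : ℝ} (hE : E ⊆ Icc a b) {L : ℕ}
    (ξ : Fin L → ℝ) (hξ : ∀ j, ξ j ∈ E) (hsep : Pairwise fun j j' => δ < |ξ j - ξ j'|) :
    L ≤ coverNumber δ E := by
  set n := ⌈(b - a) / δ⌉₊ + 1
  have hcover : Coverable δ n E := by
    refine (coverable_Ico hδ a n).mono (hE.trans fun z hz => ⟨hz.1, ?_⟩)
    have := Nat.le_ceil ((b - a) / δ)
    rw [div_le_iff₀ hδ] at this
    push_cast [n]
    nlinarith [hz.2]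
  exact le_csInf ⟨n, Nat.succ_pos _, hcover⟩ fun m hm => hm.2.le_of_separated ξ hξ hsep

lemma pairwise_lt_abs_sub_mul {c : ℝ} (hδc : δ < c) (L : ℕ) :
    Pairwise fun j j' : Fin L => δ < |(j : ℝ) * c - j' * c| := by
  intro j j' hne
  have hdist : (1 : ℤ) ≤ |(j : ℤ) - j'| :=
    Int.one_le_abs (sub_ne_zero.2 (by exact_mod_cast Fin.val_ne_of_ne hne))
  replace hdist : (1 : ℝ) ≤ |(j : ℝ) - j'| := by exact_mod_cast hdist
  rw [← sub_mul, abs_mul]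
  nlinarith [le_abs_self c, abs_nonneg c]

end CoverNumber

namespace Bisection

noncomputable def dyadicLo (b : ℕ → Bool) (m : ℕ) : ℝ :=
  ∑ i ∈ Finset.range m, if b i then (2 : ℝ)⁻¹ ^ (i + 1) else 0

lemma dyadicLo_succ (b : ℕ → Bool) (m : ℕ) :
    dyadicLo b (m + 1) = dyadicLo b m + if b m then (2 : ℝ)⁻¹ ^ (m + 1) else 0 :=
  Finset.sum_range_succ _ _

lemma dyadicLo_nonneg (b : ℕ → Bool) (m : ℕ) : 0 ≤ dyadicLo b m :=
  Finset.sum_nonneg fun i _ => by split <;> positivity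

lemma dyadicLo_add_le_one (b : ℕ → Bool) (m : ℕ) : dyadicLo b m + (2 : ℝ)⁻¹ ^ m ≤ 1 := by
  induction m with
  | zero => simp [dyadicLo]
  | succ m ih =>
    rw [dyadicLo_succ, pow_succ]
    split <;> linarith [pow_pos (inv_pos.2 (two_pos (α := ℝ))) m]

lemma dyadicLo_congr {b b' : ℕ → Bool} {m : ℕ} (h : ∀ i < m, b i = b' i) :
    dyadicLo b m = dyadicLo b' m :=
  Finset.sum_congr rfl fun i hi => by rw [h i (Finset.mem_range.1 hi)]

noncomputable def query (a w : ℝ) (b : ℕ → Bool) (m : ℕ) : ℝ :=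
  a + w * (dyadicLo b m + (2 : ℝ)⁻¹ ^ (m + 1))

lemma query_mem_Ico {a w : ℝ} (hw : 0 < w) (b : ℕ → Bool) (m : ℕ) :
    query a w b m ∈ Ico a (a + w) := by
  have h0 := dyadicLo_nonneg b m
  have h1 := dyadicLo_add_le_one b m
  have hp : (0 : ℝ) < 2⁻¹ ^ (m + 1) := by positivity
  have hq : dyadicLo b m + 2⁻¹ ^ (m + 1) < 1 := by rw [pow_succ] at *; linarith
  constructor <;> dsimp only [query] <;> nlinarith

variable (a w x : ℝ)

-- The lower end of the interval reached after `m` halvings, measured from `a` in units of `w`.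
noncomputable def lo : ℕ → ℝ
  | 0 => 0
  | m + 1 => lo m + if a + w * (lo m + (2 : ℝ)⁻¹ ^ (m + 1)) ≤ x then (2 : ℝ)⁻¹ ^ (m + 1) else 0

noncomputable def bits (m : ℕ) : Bool :=
  decide (a + w * (lo a w x m + (2 : ℝ)⁻¹ ^ (m + 1)) ≤ x)

lemma lo_eq_dyadicLo (m : ℕ) : lo a w x m = dyadicLo (bits a w x) m := by
  induction m with
  | zero => simp [lo, dyadicLo]
  | succ m ih => simp only [lo, dyadicLo_succ, bits, decide_eq_true_eq, ← ih]

lemma bits_eq_decide (m : ℕ) : bits a w x m = decide (query a w (bits a w x) m ≤ x) := by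
  rw [bits, query, lo_eq_dyadicLo]

variable {a w x}

lemma lo_bounds (hx : x ∈ Ico a (a + w)) (m : ℕ) :
    a + w * lo a w x m ≤ x ∧ x < a + w * (lo a w x m + (2 : ℝ)⁻¹ ^ m) := by
  induction m with
  | zero => simpa [lo] using hx
  | succ m ih =>
    have hhalf : ((2 : ℝ)⁻¹ ^ (m + 1)) + 2⁻¹ ^ (m + 1) = 2⁻¹ ^ m := by rw [pow_succ]; ring
    simp only [lo]
    split_ifs with h
    · exact ⟨h, by rw [add_assoc, hhalf]; exact ih.2⟩
    · exact ⟨by linarith [ih.1], by linarith⟩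

lemma abs_query_bits_sub_le (hx : x ∈ Ico a (a + w)) (m : ℕ) :
    |query a w (bits a w x) m - x| ≤ w * (2 : ℝ)⁻¹ ^ (m + 1) := by
  obtain ⟨hlo, hhi⟩ := lo_bounds hx m
  rw [query, ← lo_eq_dyadicLo, abs_le]
  rw [pow_succ] at *
  constructor <;> nlinarith

end Bisection

namespace DecoyBisection

open Bisection

variable (L M : ℕ) (ε : ℝ)

noncomputable def pairQuery (n : ℕ) : ℝ := ((n / 2 : ℕ) : ℝ) / L + if n % 2 = 1 then ε else 0

noncomputable def queryPath (g : ℕ) (b : ℕ → Bool) (n : ℕ) : ℝ :=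
  if n < 2 * L then pairQuery L ε n else Bisection.query (g / L + ε) (1 / L - ε) b (n - 2 * L)

def pairCount (h : ℕ → Bool) : ℕ := ((Finset.range (2 * L)).filter fun n => h n).card

/- The phase-one responses are monotone, so `pairCount` exceeds by one the index of the last
pair query below `x`: it is odd exactly when `x` lies in a pair interval `[c/L, c/L + ε)`, and
`(pairCount - 1) / 2` is the cell `c` of `x`. -/
noncomputable def honestQuery (h : ℕ → Bool) (n : ℕ) : ℝ :=
  queryPath L ε ((pairCount L h - 1) / 2) (fun i => h (2 * L + i)) n

noncomputable def rule (s : Fin L × (Fin M → Bool)) (h : ℕ → Bool) (n : ℕ) : ℝ :=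
  if pairCount L h % 2 = 1 then queryPath L ε s.1 (Strategy.pad s.2) n else honestQuery L ε h n

-- The honest estimate is the next bisection query: the midpoint of the last interval.
noncomputable def estimateRule (h : ℕ → Bool) : ℝ :=
  if pairCount L h % 2 = 1 then (((pairCount L h - 1) / 2 : ℕ) : ℝ) / L + ε / 2
  else honestQuery L ε h (2 * L + M)

variable {L M ε}

lemma queryPath_of_lt {g : ℕ} {b : ℕ → Bool} {n : ℕ} (hn : n < 2 * L) :
    queryPath L ε g b n = pairQuery L ε n :=
  if_pos hn

lemma queryPath_congr {g : ℕ} {b b' : ℕ → Bool} {n : ℕ} (h : ∀ i < n - 2 * L, b i = b' i) :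
    queryPath L ε g b n = queryPath L ε g b' n := by
  simp only [queryPath, Bisection.query, dyadicLo_congr h]

lemma pairCount_congr {h h' : ℕ → Bool} (hh : ∀ n < 2 * L, h n = h' n) :
    pairCount L h = pairCount L h' := by
  rw [pairCount, pairCount, Finset.filter_congr fun n hn => by rw [hh n (Finset.mem_range.1 hn)]]

lemma pairCount_le (h : ℕ → Bool) : pairCount L h ≤ 2 * L :=
  (Finset.card_filter_le _ _).trans (Finset.card_range _).le

lemma rule_causal (s : Fin L × (Fin M → Bool)) : Strategy.IsCausal (rule L M ε s) := by
  intro h h' n hh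
  by_cases hn : n < 2 * L
  · simp only [rule, honestQuery, queryPath_of_lt hn, ite_self]
  · have hcount := pairCount_congr (L := L) fun i hi => hh i (by omega)
    simp only [rule, honestQuery, hcount]
    rw [queryPath_congr fun i hi => hh (2 * L + i) (by omega)]

lemma estimateRule_local {h h' : ℕ → Bool} (hh : ∀ i < 2 * L + M, h i = h' i) :
    estimateRule L M ε h = estimateRule L M ε h' := by
  have hcount := pairCount_congr (L := L) fun i hi => hh i (by omega)
  simp only [estimateRule, honestQuery, hcount]
  rw [queryPath_congr fun i hi => hh (2 * L + i) (by omega)]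

section Bounds

variable (hL : 0 < L) (hε : 0 < ε) (hεL : ε < 1 / L)
include hL

lemma div_add_inv_le_one {j : ℕ} (hj : j < L) : (j : ℝ) / L + 1 / L ≤ 1 := by
  rw [← add_div, div_le_one (by positivity)]
  exact_mod_cast hj

include hε hεL

lemma pairQuery_mem {n : ℕ} (hn : n < 2 * L) : pairQuery L ε n ∈ Ico (0 : ℝ) 1 := by
  have := div_add_inv_le_one hL (j := n / 2) (by omega)
  constructor <;> dsimp only [pairQuery] <;> split <;> first | positivity | linarith

lemma queryPath_mem {g : ℕ} (hg : g < L) (b : ℕ → Bool) (n : ℕ) :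
    queryPath L ε g b n ∈ Ico (0 : ℝ) 1 := by
  by_cases hn : n < 2 * L
  · rw [queryPath_of_lt hn]
    exact pairQuery_mem hL hε hεL hn
  · rw [queryPath, if_neg hn]
    have hmem := Bisection.query_mem_Ico (a := g / L + ε) (sub_pos.2 hεL) b (n - 2 * L)
    have := div_add_inv_le_one hL hg
    exact ⟨le_trans (by positivity) hmem.1, by linarith [hmem.2]⟩

lemma rule_mem (s : Fin L × (Fin M → Bool)) (h : ℕ → Bool) (n : ℕ) :
    rule L M ε s h n ∈ Ico (0 : ℝ) 1 := by
  have := pairCount_le (L := L) h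
  unfold rule honestQuery
  split <;> exact queryPath_mem hL hε hεL (by omega) _ _

lemma estimateRule_mem (h : ℕ → Bool) : estimateRule L M ε h ∈ Ico (0 : ℝ) 1 := by
  have := pairCount_le (L := L) h
  unfold estimateRule honestQuery
  split
  · have := div_add_inv_le_one hL (j := (pairCount L h - 1) / 2) (by omega)
    exact ⟨by positivity, by linarith⟩
  · exact queryPath_mem hL hε hεL (by omega) _ _

end Bounds

noncomputable def strategy (hL : 0 < L) (hε : 0 < ε) (hεL : ε < 1 / L) :
    Strategy (2 * L + M) (Fintype.card (Fin L × (Fin M → Bool))) :=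
  Strategy.ofRule (rule L M ε) (fun _ => estimateRule L M ε) (rule_mem hL hε hεL)
    fun _ => estimateRule_mem hL hε hεL

variable (L ε) in
noncomputable def cell (x : ℝ) : ℕ := ⌊L * x⌋₊

variable (L ε) in
noncomputable def lastPair (x : ℝ) : ℕ :=
  2 * cell L x + if x < cell L x / L + ε then 0 else 1

section PairPhase

variable (hL : 0 < L) {x : ℝ}
include hL

lemma cell_eq_iff (hx : 0 ≤ x) {j : ℕ} : cell L x = j ↔ x ∈ Ico (j / L : ℝ) ((j + 1) / L) := by
  have hL' : (0 : ℝ) < L := by exact_mod_cast hL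
  rw [cell, Nat.floor_eq_iff (by positivity), mem_Ico, div_le_iff₀ hL', lt_div_iff₀ hL',
    mul_comm x]

lemma cell_lt (hx : x ∈ Ico (0 : ℝ) 1) : cell L x < L := by
  rw [cell, Nat.floor_lt (mul_nonneg (Nat.cast_nonneg L) hx.1)]
  exact mul_lt_of_lt_one_right (by exact_mod_cast hL) hx.2

omit hL in
lemma pairQuery_two_mul (j : ℕ) : pairQuery L ε (2 * j) = j / L := by
  simp [pairQuery, Nat.mul_div_cancel_left j two_pos]

omit hL in
lemma pairQuery_two_mul_add_one (j : ℕ) : pairQuery L ε (2 * j + 1) = j / L + ε := by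
  have : (2 * j + 1) / 2 = j := by omega
  simp [pairQuery, this]

omit hL in
lemma pairQuery_strictMono (hε : 0 < ε) (hεL : ε < 1 / L) : StrictMono (pairQuery L ε) := by
  refine strictMono_nat_of_lt_succ fun n => ?_
  obtain ⟨j, rfl | rfl⟩ := Nat.even_or_odd' n
  · rw [pairQuery_two_mul, pairQuery_two_mul_add_one]
    linarith
  · rw [pairQuery_two_mul_add_one, show 2 * j + 1 + 1 = 2 * (j + 1) by ring, pairQuery_two_mul]
    push_cast
    rw [add_div]
    linarith

lemma pairQuery_le_iff (hε : 0 < ε) (hεL : ε < 1 / L) (hx : x ∈ Ico (0 : ℝ) 1) {n : ℕ} :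
    pairQuery L ε n ≤ x ↔ n ≤ lastPair L ε x := by
  have hmono := pairQuery_strictMono hε hεL
  obtain ⟨hcell, hcell'⟩ := (cell_eq_iff hL hx.1).1 rfl
  have hlast : pairQuery L ε (lastPair L ε x) ≤ x ∧ x < pairQuery L ε (lastPair L ε x + 1) := by
    unfold lastPair
    split_ifs with hpair
    · rw [add_zero, pairQuery_two_mul, pairQuery_two_mul_add_one]
      exact ⟨hcell, hpair⟩
    · rw [pairQuery_two_mul_add_one, show 2 * cell L x + 1 + 1 = 2 * (cell L x + 1) by ring,
        pairQuery_two_mul]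
      push_cast
      exact ⟨not_lt.1 hpair, hcell'⟩
  constructor
  · intro hn
    by_contra! hlt
    exact lt_irrefl x (hlast.2.trans_le ((hmono.monotone hlt).trans hn))
  · exact fun hn => (hmono.monotone hn).trans hlast.1

lemma lastPair_lt (hx : x ∈ Ico (0 : ℝ) 1) : lastPair L ε x < 2 * L := by
  have := cell_lt hL hx
  unfold lastPair
  split <;> omega

lemma pairCount_eq (hε : 0 < ε) (hεL : ε < 1 / L) (hx : x ∈ Ico (0 : ℝ) 1) {h : ℕ → Bool}
    (hh : ∀ n < 2 * L, h n = decide (pairQuery L ε n ≤ x)) :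
    pairCount L h = lastPair L ε x + 1 := by
  have hlt := lastPair_lt (ε := ε) hL hx
  rw [pairCount, ← Finset.card_range (lastPair L ε x + 1)]
  congr 1
  ext n
  simp only [Finset.mem_filter, Finset.mem_range]
  constructor
  · rintro ⟨hn, hhn⟩
    rw [hh n hn, decide_eq_true_iff, pairQuery_le_iff hL hε hεL hx] at hhn
    omega
  · intro hn
    rw [hh n (by omega), decide_eq_true_iff, pairQuery_le_iff hL hε hεL hx]
    omega

end PairPhase

variable (L M ε) in
noncomputable def truePath (s : Fin L × (Fin M → Bool)) (x : ℝ) (n : ℕ) : ℝ :=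
  if x < cell L x / L + ε then queryPath L ε s.1 (Strategy.pad s.2) n
  else queryPath L ε (cell L x) (bits (cell L x / L + ε) (1 / L - ε) x) n

variable (L M ε) in
noncomputable def run (s : Fin L × (Fin M → Bool)) (x : ℝ) (n : ℕ) : Bool :=
  decide (truePath L M ε s x n ≤ x)

section Run

variable (hL : 0 < L) (hε : 0 < ε) (hεL : ε < 1 / L) {x : ℝ} (hx : x ∈ Ico (0 : ℝ) 1)
  (s : Fin L × (Fin M → Bool))
include hL hε hεL hx

lemma pairCount_run : pairCount L (run L M ε s x) = lastPair L ε x + 1 :=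
  pairCount_eq hL hε hεL hx fun n hn => by
    rw [run, truePath]
    split <;> rw [queryPath_of_lt hn]

lemma honestQuery_run (hgap : ¬x < cell L x / L + ε) (n : ℕ) :
    honestQuery L ε (run L M ε s x) n
      = queryPath L ε (cell L x) (bits (cell L x / L + ε) (1 / L - ε) x) n := by
  have hlast : lastPair L ε x = 2 * cell L x + 1 := by simp [lastPair, hgap]
  have hbits : (fun i => run L M ε s x (2 * L + i)) = bits (cell L x / L + ε) (1 / L - ε) x := by
    funext i
    rw [bits_eq_decide, run, truePath, if_neg hgap, queryPath, if_neg (by omega),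
      Nat.add_sub_cancel_left]
  rw [honestQuery, pairCount_run hL hε hεL hx, hlast, hbits]
  congr 1
  omega

lemma rule_run (n : ℕ) : rule L M ε s (run L M ε s x) n = truePath L M ε s x n := by
  by_cases hpair : x < cell L x / L + ε
  · have hlast : lastPair L ε x = 2 * cell L x := by simp [lastPair, hpair]
    simp [rule, truePath, pairCount_run hL hε hεL hx, hlast, hpair]
  · have hlast : lastPair L ε x = 2 * cell L x + 1 := by simp [lastPair, hpair]
    rw [rule, truePath, if_neg hpair, pairCount_run hL hε hεL hx, hlast, if_neg (by omega),
      honestQuery_run hL hε hεL hx s hpair]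

lemma run_eq_decide_rule (n : ℕ) :
    run L M ε s x n = decide (rule L M ε s (run L M ε s x) n ≤ x) := by
  rw [rule_run hL hε hεL hx]
  rfl

lemma abs_estimateRule_run_sub_le (hM : (2 : ℝ)⁻¹ ^ M ≤ L * ε) :
    |estimateRule L M ε (run L M ε s x) - x| ≤ ε / 2 := by
  obtain ⟨hcell, hcell'⟩ := (cell_eq_iff hL hx.1).1 rfl
  rw [add_div] at hcell'
  by_cases hpair : x < cell L x / L + ε
  · have hlast : lastPair L ε x = 2 * cell L x := by simp [lastPair, hpair]
    have hc : (2 * cell L x + 1 - 1) / 2 = cell L x := by omega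
    rw [estimateRule, pairCount_run hL hε hεL hx, hlast, if_pos (by omega), hc, abs_le]
    constructor <;> linarith
  · have hlast : lastPair L ε x = 2 * cell L x + 1 := by simp [lastPair, hpair]
    rw [estimateRule, pairCount_run hL hε hεL hx, hlast, if_neg (by omega),
      honestQuery_run hL hε hεL hx s hpair, queryPath, if_neg (by omega), Nat.add_sub_cancel_left]
    have hgap : x ∈ Ico (cell L x / L + ε : ℝ) (cell L x / L + ε + (1 / L - ε)) :=
      ⟨not_lt.1 hpair, by linarith⟩
    have hwidth : (1 / L - ε) * (2 : ℝ)⁻¹ ^ M ≤ ε :=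
      calc (1 / L - ε) * (2 : ℝ)⁻¹ ^ M ≤ 1 / L * (L * ε) := by
            gcongr
            linarith
        _ = ε := by field_simp
    calc _ ≤ (1 / L - ε) * (2 : ℝ)⁻¹ ^ (M + 1) := abs_query_bits_sub_le hgap M
      _ ≤ ε / 2 := by rw [pow_succ]; linarith

end Run

lemma truePath_eq_queryPath (hL : 0 < L) {x : ℝ} (hx : x ∈ Ico (0 : ℝ) 1)
    (s : Fin L × (Fin M → Bool)) : ∃ g < L, ∃ b, truePath L M ε s x = queryPath L ε g b := by
  by_cases hpair : x < cell L x / L + ε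
  · exact ⟨s.1, s.1.2, _, funext fun n => if_pos hpair⟩
  · exact ⟨cell L x, cell_lt hL hx, _, funext fun n => if_neg hpair⟩

lemma truePath_of_mem_pair (hL : 0 < L) (hεL : ε < 1 / L) {j : ℕ} {x : ℝ}
    (hx : x ∈ Ico (j / L : ℝ) (j / L + ε)) (s : Fin L × (Fin M → Bool)) :
    truePath L M ε s x = queryPath L ε s.1 (Strategy.pad s.2) := by
  have hcell : cell L x = j := by
    rw [cell_eq_iff hL (le_trans (by positivity) hx.1), add_div]
    exact ⟨hx.1, by linarith [hx.2]⟩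
  funext n
  rw [truePath, if_pos (by rw [hcell]; exact hx.2)]

lemma Q_strategy (hL : 0 < L) (hε : 0 < ε) (hεL : ε < 1 / L) {x : ℝ} (hx : x ∈ Ico (0 : ℝ) 1) :
    (strategy (M := M) hL hε hεL).Q x
      = range fun s (k : Fin (2 * L + M)) => truePath L M ε s x k := by
  rw [strategy, Strategy.Q_ofRule rule_causal fun s n _ => run_eq_decide_rule hL hε hεL hx s n]
  simp only [rule_run hL hε hεL hx]

lemma pair_subset_infoSet (hL : 0 < L) (hε : 0 < ε) (hεL : ε < 1 / L) {x : ℝ}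
    (hx : x ∈ Ico (0 : ℝ) 1) {q : Fin (2 * L + M) → ℝ} (hq : q ∈ (strategy hL hε hεL).Q x)
    {j : ℕ} (hj : j < L) : Ico (j / L : ℝ) (j / L + ε) ⊆ (strategy hL hε hεL).infoSet q := by
  rw [Q_strategy hL hε hεL hx] at hq
  obtain ⟨s, rfl⟩ := hq
  obtain ⟨g, hg, b, hpath⟩ := truePath_eq_queryPath (ε := ε) hL hx s
  intro x' hx'
  have hx'01 : x' ∈ Ico (0 : ℝ) 1 :=
    ⟨le_trans (by positivity) hx'.1, by linarith [hx'.2, div_add_inv_le_one hL hj]⟩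
  refine ⟨hx'01, ?_⟩
  rw [Q_strategy hL hε hεL hx'01]
  refine ⟨(⟨g, hg⟩, fun i => b i), funext fun k => ?_⟩
  dsimp only
  rw [truePath_of_mem_pair hL hεL hx', hpath]
  exact queryPath_congr fun i hi => Strategy.pad_of_lt _ (by omega)

lemma accurate_strategy (hL : 0 < L) (hε : 0 < ε) (hεL : ε < 1 / L)
    (hM : (2 : ℝ)⁻¹ ^ M ≤ L * ε) : (strategy (M := M) hL hε hεL).Accurate ε := by
  intro x hx y
  obtain ⟨s, rfl⟩ := (Fintype.equivFin _).surjective y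
  rw [strategy, Strategy.estim_ofRule (rule_causal s)
    (fun n _ => run_eq_decide_rule hL hε hεL hx s n) fun _ _ => estimateRule_local]
  exact abs_estimateRule_run_sub_le hL hε hεL hx s hM

lemma le_coverNumber_infoSet (hL : 0 < L) (hε : 0 < ε) (hεL : ε < 1 / L) {δ : ℝ} (hδ : 0 < δ)
    (hδL : δ ≤ 1 / L) {x : ℝ} (hx : x ∈ Ico (0 : ℝ) 1) {q : Fin (2 * L + M) → ℝ}
    (hq : q ∈ (strategy hL hε hεL).Q x) : L ≤ coverNumber δ ((strategy hL hε hεL).infoSet q) := by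
  have hL' : (0 : ℝ) < L := by exact_mod_cast hL
  have hstep : δ < (1 + ε) / L := hδL.trans_lt (div_lt_div_of_pos_right (by linarith) hL')
  have hmem (j : Fin L) : (j : ℝ) * ((1 + ε) / L) ∈ Ico (j / L : ℝ) (j / L + ε) := by
    have hj : (j : ℝ) * ε < L * ε := mul_lt_mul_of_pos_right (by exact_mod_cast j.2) hε
    have hshift : (j : ℝ) * (ε / L) < ε := by rw [mul_div_assoc', div_lt_iff₀ hL']; linarith
    rw [mul_div_assoc', mul_one_add, add_div, mul_div_assoc (j : ℝ) ε]
    exact ⟨le_add_of_nonneg_right (by positivity), by linarith⟩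
  exact le_coverNumber_of_separated hδ (fun z hz => Ico_subset_Icc_self hz.1) _
    (fun j => pair_subset_infoSet hL hε hεL hx hq j.2 (hmem j)) (pairwise_lt_abs_sub_mul hstep L)

theorem isPrivate_strategy (hL : 0 < L) (hε : 0 < ε) (hεL : ε < 1 / L) {δ : ℝ} (hδ : 0 < δ)
    (hδL : δ ≤ 1 / L) (hM : (2 : ℝ)⁻¹ ^ M ≤ L * ε) :
    IsPrivate ε δ L (strategy (M := M) hL hε hεL) :=
  ⟨accurate_strategy hL hε hεL hM, fun _ hx _ hq => le_coverNumber_infoSet hL hε hεL hδ hδL hx hq⟩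

end DecoyBisection

lemma inv_two_pow_le_of_logb_le {t : ℝ} (ht : 0 < t) {M : ℕ} (hM : Real.logb 2 (1 / t) ≤ M) :
    (2 : ℝ)⁻¹ ^ M ≤ t := by
  rw [Real.logb_le_iff_le_rpow one_lt_two (by positivity), Real.rpow_natCast] at hM
  rwa [inv_pow, inv_le_comm₀ (by positivity) ht, ← one_div]

/-- upper bound `N*(ε,δ,L) ≤ ⌈log₂(1/(Lε))⌉ + 2L`, witnessed by a private
strategy of exactly that length. -/
theorem private_learning_upper_bound (ε δ : ℝ) (L : ℕ) (hL : 2 ≤ L)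
    (hε : 0 < ε) (hδ : 0 < δ) (h1 : 2 * ε < δ) (h2 : δ ≤ 1 / (L : ℝ)) :
    (Nstar ε δ L : ℤ) ≤ ⌈Real.logb 2 (1 / ((L : ℝ) * ε))⌉ + 2 * (L : ℤ) ∧
    ∃ (N Y : ℕ), 0 < Y ∧ (N : ℤ) = ⌈Real.logb 2 (1 / ((L : ℝ) * ε))⌉ + 2 * (L : ℤ) ∧
      ∃ φ : Strategy N Y, IsPrivate ε δ L φ := by
  have hL0 : 0 < L := by omega
  have hεL : ε < 1 / L := by linarith
  have hLε : 0 < (L : ℝ) * ε := by positivity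
  have hLε1 : (L : ℝ) * ε ≤ 1 := by
    rw [lt_div_iff₀ (by positivity)] at hεL
    linarith
  set C := ⌈Real.logb 2 (1 / ((L : ℝ) * ε))⌉
  have hC : 0 ≤ C := Int.ceil_nonneg (Real.logb_nonneg one_lt_two (one_le_one_div hLε hLε1))
  set M := C.toNat
  have hMC : ((M : ℤ) : ℝ) = C := by exact_mod_cast Int.toNat_of_nonneg hC
  have hM : (2 : ℝ)⁻¹ ^ M ≤ L * ε :=
    inv_two_pow_le_of_logb_le hLε (by rw [← Int.cast_natCast M, hMC]; exact Int.le_ceil _)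
  have hpriv := DecoyBisection.isPrivate_strategy hL0 hε hεL hδ h2 hM
  have hY : 0 < Fintype.card (Fin L × (Fin M → Bool)) :=
    Fintype.card_pos_iff.2 ⟨(⟨0, hL0⟩, fun _ => false)⟩
  have hN : ((2 * L + M : ℕ) : ℤ) = C + 2 * L := by
    push_cast
    rw [Int.toNat_of_nonneg hC]
    ring
  refine ⟨?_, 2 * L + M, _, hY, hN, _, hpriv⟩
  rw [← hN]
  exact Nat.cast_le.2 (Nat.sInf_le ⟨_, hY, _, hpriv⟩)
end

section
/- Let ε > 0, δ > 0 and let L ≥ 2 be an integer with 2ε < δ ≤ 1/L. Then N*(ε,δ,L) ≥ ⌈log(δ/ε)⌉ + 2L − 4; that is, every (ε,δ,L)-private learner strategy of length N has N ≥ ⌈log(δ/ε)⌉ + 2L − 4. -/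
open Set

/-!
Fix a seed. If, as seen from every point of a window `[a, b)`, at most `j` queries fall inside
`(a, b)`, then `b - a ≤ 2 ^ j * ε`: a window without inner queries is a single response class,
hence of width at most `ε` by accuracy, and otherwise the first inner query asked from `a` is
asked from every point of the window and splits it in two. So some `x ∈ [0, δ)` is asked at
least `⌈log (δ / ε)⌉` queries inside `(0, δ)`.

The information set `I` of the query sequence of `x` needs `L` intervals of length `δ`, one of
which covers `I ∩ [0, δ]`. Covering `I` greedily from the left therefore produces points
`δ < z₀ < ⋯ < z_{L-2}` of `I`, consecutive ones more than `2ε` apart. Accuracy forces a query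
within `ε` above and below every point of `I` (otherwise the point could be moved by more than
`ε` without changing any response), so each of the `L - 2` gaps contains two further queries.

The least length `N*` is attained since a fine enough uniform grid is a private strategy.
-/

open Filter Topology
open scoped Finset

section FiniteGaps

variable {α : Type*} [LinearOrder α] [TopologicalSpace α] [OrderTopology α] [DenselyOrdered α]
  {s : Set α} {a b : α}

theorem Set.Finite.exists_mem_Ioo_lt_of_lt (hs : s.Finite) (hab : a < b) :
    ∃ c ∈ Ioo a b, ∀ x ∈ s, a < x → c < x :=
  haveI := nhdsGT_neBot_of_exists_gt ⟨b, hab⟩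
  (Filter.Eventually.and (Ioo_mem_nhdsGT hab) <| hs.eventually_all.2 fun _ _ =>
    eventually_imp_distrib_left.2 fun hx =>
      (eventually_lt_nhds hx).filter_mono nhdsWithin_le_nhds).exists

theorem Set.Finite.exists_mem_Ioo_lt_of_gt (hs : s.Finite) (hab : a < b) :
    ∃ c ∈ Ioo a b, ∀ x ∈ s, x < b → x < c :=
  haveI := nhdsLT_neBot_of_exists_lt ⟨a, hab⟩
  (Filter.Eventually.and (Ioo_mem_nhdsLT hab) <| hs.eventually_all.2 fun _ _ =>
    eventually_imp_distrib_left.2 fun hx =>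
      (eventually_gt_nhds hx).filter_mono nhdsWithin_le_nhds).exists

end FiniteGaps

lemma le_iff_le_of_notMem_Ioo {α : Type*} [LinearOrder α] {q a b x : α} (hq : q ∉ Ioo a b)
    (hx : x ∈ Ico a b) : q ≤ a ↔ q ≤ x :=
  ⟨fun h => h.trans hx.1, fun h => not_lt.1 fun hqa => hq ⟨hqa, h.trans_lt hx.2⟩⟩

section QueryIndices

variable {N : ℕ}

open Classical in
noncomputable def queryIndices (q : Fin N → ℝ) (I : Set ℝ) : Finset (Fin N) := {k | q k ∈ I}

variable {q : Fin N → ℝ} {I J K : Set ℝ}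

@[simp] lemma mem_queryIndices {k : Fin N} : k ∈ queryIndices q I ↔ q k ∈ I := by
  simp [queryIndices]

lemma card_queryIndices_lt (hIJ : I ⊆ J) {k : Fin N} (hk : q k ∈ J \ I) :
    #(queryIndices q I) < #(queryIndices q J) :=
  Finset.card_lt_card <|
    (Finset.ssubset_iff_of_subset fun k hk => by simpa using hIJ (by simpa using hk)).2
      ⟨k, by simpa using hk.1, by simpa using hk.2⟩

lemma card_queryIndices_add_card_le (hIJ : Disjoint I J) (hK : I ∪ J ⊆ K) :
    #(queryIndices q I) + #(queryIndices q J) ≤ #(queryIndices q K) := by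
  rw [← Finset.card_union_of_disjoint]
  · exact Finset.card_le_card fun k hk => by simp_all [hK (by simpa using hk)]
  · exact Finset.disjoint_left.2 fun k hkI hkJ => hIJ.notMem_of_mem_left (by simpa using hkI)
      (by simpa using hkJ)

end QueryIndices

namespace Strategy

variable {N Y : ℕ} (φ : Strategy N Y) {x x' : ℝ} {y : Fin Y}

lemma resps_eq_decide : ∀ {K : ℕ} (hK : K ≤ N) (i : Fin K),
    φ.resps x y K i = decide (φ.queries x y (Fin.castLE hK i) ≤ x)
  | 0, _, i => i.elim0
  | K + 1, hK, i => by
    by_cases hi : (i : ℕ) < K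
    · simp only [resps, dif_pos hi]
      exact resps_eq_decide (by omega) ⟨i, hi⟩
    · obtain ⟨i, hiK⟩ := i
      obtain rfl : i = K := by simp only [not_lt] at hi; omega
      simp only [resps, dif_neg hi, dif_pos (show i < N by omega)]
      rfl

lemma resps_eq_of_forall_le_iff : ∀ {K : ℕ}, K ≤ N →
    (∀ k : Fin N, (k : ℕ) < K → (φ.queries x y k ≤ x ↔ φ.queries x y k ≤ x')) →
    φ.resps x' y K = φ.resps x y K
  | 0, _, _ => funext fun i => i.elim0
  | K + 1, hK, h => by
    have ih := resps_eq_of_forall_le_iff (K := K) (by omega) fun k hk => h k (by omega)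
    funext i
    by_cases hi : (i : ℕ) < K
    · simp only [resps, dif_pos hi, ih]
    · have hKN : K < N := by omega
      simp only [resps, dif_neg hi, dif_pos hKN, ih]
      exact decide_eq_decide.mpr (h ⟨K, hKN⟩ (by simp)).symm

variable {φ} {ε : ℝ}

lemma Accurate.abs_sub_le (hφ : φ.Accurate ε) (hx : x ∈ Ico 0 1) (hx' : x' ∈ Ico 0 1)
    (h : ∀ k, φ.queries x y k ≤ x ↔ φ.queries x y k ≤ x') : |x - x'| ≤ ε := by
  have hest : φ.estim x' y = φ.estim x y := by
    rw [estim, estim, φ.resps_eq_of_forall_le_iff le_rfl fun k _ => h k]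
  have h₁ := hφ x hx y
  have h₂ := hφ x' hx' y
  rw [hest] at h₂
  calc |x - x'| = |(φ.estim x y - x') - (φ.estim x y - x)| := by congr 1; ring
    _ ≤ |φ.estim x y - x'| + |φ.estim x y - x| := abs_sub _ _
    _ ≤ ε := by linarith

lemma Accurate.nonneg (hφ : φ.Accurate ε) (y : Fin Y) : 0 ≤ ε := by
  simpa using hφ.abs_sub_le (y := y) (x := 0) (by simp) (by simp) fun _ => Iff.rfl

lemma Accurate.exists_query_mem_Ioc (hφ : φ.Accurate ε) {q : Fin N → ℝ} {z : ℝ}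
    (hz : z ∈ φ.infoSet q) (hz1 : z + ε < 1) : ∃ k, q k ∈ Ioc z (z + ε) := by
  obtain ⟨hz01, y, rfl⟩ := hz
  have hε := hφ.nonneg y
  by_contra! hq
  obtain ⟨c, hc, hqc⟩ := (finite_range (φ.queries z y)).exists_mem_Ioo_lt_of_lt hz1
  have hside : ∀ k, φ.queries z y k ≤ z ↔ φ.queries z y k ≤ c := fun k =>
    ⟨fun h => by linarith [hc.1], fun h => not_lt.1 fun hzk =>
      (hqc _ (mem_range_self k) (lt_of_not_ge fun h' => hq k ⟨hzk, h'⟩)).not_ge h⟩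
  have := hφ.abs_sub_le hz01 ⟨by linarith [hz01.1, hc.1], hc.2⟩ hside
  rw [abs_le] at this
  linarith [hc.1]

lemma Accurate.exists_query_mem_Icc (hφ : φ.Accurate ε) {q : Fin N → ℝ} {z : ℝ}
    (hz : z ∈ φ.infoSet q) (hz0 : 0 < z - ε) : ∃ k, q k ∈ Icc (z - ε) z := by
  obtain ⟨hz01, y, rfl⟩ := hz
  have hε := hφ.nonneg y
  by_contra! hq
  obtain ⟨c, hc, hqc⟩ := (finite_range (φ.queries z y)).exists_mem_Ioo_lt_of_gt hz0
  have hside : ∀ k, φ.queries z y k ≤ z ↔ φ.queries z y k ≤ c := fun k =>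
    ⟨fun h => (hqc _ (mem_range_self k) (lt_of_not_ge fun h' => hq k ⟨h', h⟩)).le,
      fun h => by linarith [hc.2]⟩
  have := hφ.abs_sub_le hz01 ⟨hc.1.le, by linarith [hz01.2, hc.2]⟩ hside
  rw [abs_le] at this
  linarith [hc.2]

lemma Accurate.sub_le_of_forall_notMem (hφ : φ.Accurate ε) {a b : ℝ} (ha : 0 ≤ a) (hb : b ≤ 1)
    (h : ∀ k, φ.queries a y k ∉ Ioo a b) : b - a ≤ ε := by
  refine sub_le_iff_le_add'.2 <| le_of_forall_lt_imp_le_of_dense fun x hxb => ?_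
  rcases lt_or_ge x a with hxa | hax
  · linarith [hφ.nonneg y]
  have hx : x ∈ Ico a b := ⟨hax, hxb⟩
  have := hφ.abs_sub_le ⟨ha, by linarith [hx.2]⟩ ⟨ha.trans hax, by linarith [hx.2]⟩
    fun k => le_iff_le_of_notMem_Ioo (h k) hx
  rw [abs_le] at this
  linarith

lemma queries_eq_of_forall_lt_notMem {a b : ℝ} (hx : x ∈ Ico a b) {k₀ : Fin N}
    (h : ∀ k < k₀, φ.queries a y k ∉ Ioo a b) : φ.queries x y k₀ = φ.queries a y k₀ := by
  rw [queries, queries, φ.resps_eq_of_forall_le_iff k₀.2.le fun k hk =>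
    le_iff_le_of_notMem_Ioo (h k hk) hx]

theorem Accurate.sub_le_two_pow_mul (hφ : φ.Accurate ε) (y : Fin Y) (j : ℕ) {a b : ℝ}
    (ha : 0 ≤ a) (hb : b ≤ 1)
    (hj : ∀ x ∈ Ico a b, #(queryIndices (φ.queries x y) (Ioo a b)) ≤ j) :
    b - a ≤ 2 ^ j * ε := by
  induction j generalizing a b with
  | zero =>
    rw [pow_zero, one_mul]
    refine hφ.sub_le_of_forall_notMem (y := y) ha hb fun k hk => ?_
    have := Finset.card_pos.2 ⟨k, (mem_queryIndices (q := φ.queries a y)).2 hk⟩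
    have := hj a ⟨le_rfl, hk.1.trans hk.2⟩
    omega
  | succ j ih =>
    set T := queryIndices (φ.queries a y) (Ioo a b)
    rcases T.eq_empty_or_nonempty with hT | hT
    · calc b - a ≤ ε := hφ.sub_le_of_forall_notMem (y := y) ha hb fun k hk => by
            simpa [T, hT] using (mem_queryIndices (q := φ.queries a y)).2 hk
        _ ≤ 2 ^ (j + 1) * ε := le_mul_of_one_le_left (hφ.nonneg y) (one_le_pow₀ one_le_two)
    set k₀ := T.min' hT
    set q₀ := φ.queries a y k₀
    have hq₀ : q₀ ∈ Ioo a b := (mem_queryIndices (q := φ.queries a y)).1 (T.min'_mem hT)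
    have hsplit : ∀ x ∈ Ico a b, φ.queries x y k₀ = q₀ := fun x hx =>
      φ.queries_eq_of_forall_lt_notMem hx fun k hk hmem =>
        (T.min'_le k ((mem_queryIndices (q := φ.queries a y)).2 hmem)).not_gt hk
    have hleft : q₀ - a ≤ 2 ^ j * ε := ih ha (hq₀.2.le.trans hb) fun x hx => by
      have hxab : x ∈ Ico a b := ⟨hx.1, hx.2.trans hq₀.2⟩
      have := card_queryIndices_lt (q := φ.queries x y) (Ioo_subset_Ioo_right hq₀.2.le)
        (k := k₀) (by rw [hsplit x hxab]; exact ⟨hq₀, fun h => h.2.false⟩)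
      have := hj x hxab
      omega
    have hright : b - q₀ ≤ 2 ^ j * ε := ih (ha.trans hq₀.1.le) hb fun x hx => by
      have hxab : x ∈ Ico a b := ⟨hq₀.1.le.trans hx.1, hx.2⟩
      have := card_queryIndices_lt (q := φ.queries x y) (Ioo_subset_Ioo_left hq₀.1.le)
        (k := k₀) (by rw [hsplit x hxab]; exact ⟨hq₀, fun h => h.1.false⟩)
      have := hj x hxab
      omega
    calc b - a = (q₀ - a) + (b - q₀) := by ring
      _ ≤ 2 ^ (j + 1) * ε := by rw [pow_succ]; linarith

end Strategy

section Cover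

variable {δ : ℝ} {m n : ℕ} {E F : Set ℝ}

lemma Coverable.mono_set (h : Coverable δ n F) (hEF : E ⊆ F) : Coverable δ n E :=
  let ⟨a, b, hab, hF⟩ := h
  ⟨a, b, hab, hEF.trans hF⟩

lemma coverable_empty (n : ℕ) : Coverable δ n ∅ :=
  ⟨fun _ => 0, fun _ => δ, fun _ => (sub_zero δ).le, empty_subset _⟩

lemma coverable_one_Icc (a : ℝ) : Coverable δ 1 (Icc a (a + δ)) :=
  ⟨fun _ => a, fun _ => a + δ, fun _ => (add_sub_cancel_left a δ).le,
    subset_iUnion (fun _ : Fin 1 => Icc a (a + δ)) 0⟩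

lemma Coverable.union (hE : Coverable δ m E) (hF : Coverable δ n F) :
    Coverable δ (m + n) (E ∪ F) := by
  obtain ⟨a, b, hab, hE⟩ := hE
  obtain ⟨c, d, hcd, hF⟩ := hF
  refine ⟨Fin.append a c, Fin.append b d, Fin.addCases (by simpa using hab) (by simpa using hcd),
    union_subset (hE.trans ?_) (hF.trans ?_)⟩
  · exact iUnion_subset fun i => by
      simpa using subset_iUnion (fun j => Icc (Fin.append a c j) (Fin.append b d j))
        (Fin.castAdd n i)
  · exact iUnion_subset fun i => by
      simpa using subset_iUnion (fun j => Icc (Fin.append a c j) (Fin.append b d j))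
        (Fin.natAdd m i)

lemma Coverable.mono_num (h : Coverable δ m E) (hmn : m ≤ n) : Coverable δ n E := by
  obtain ⟨k, rfl⟩ := Nat.exists_eq_add_of_le hmn
  simpa using h.union (coverable_empty k)

lemma Coverable.inter_Ioi_nonempty {a : ℝ} (h : Coverable δ m (E ∩ Iic a)) (hmn : m ≤ n)
    (hE : ¬ Coverable δ n E) : (E ∩ Ioi a).Nonempty := by
  by_contra! hE'
  exact hE ((h.mono_num hmn).mono_set fun x hx =>
    ⟨hx, (le_of_not_gt fun hax => hE'.subset ⟨hx, hax⟩ : x ≤ a)⟩)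

lemma not_coverable_of_lt_coverNumber (hn : 0 < n) (h : n < coverNumber δ E) :
    ¬ Coverable δ n E :=
  fun hE => (Nat.sInf_le ⟨hn, hE⟩ : coverNumber δ E ≤ n).not_gt h

open MeasureTheory in
lemma Coverable.volume_le (h : Coverable δ n E) : volume E ≤ n * ENNReal.ofReal δ := by
  obtain ⟨a, b, hab, hE⟩ := h
  calc volume E ≤ volume (⋃ j, Icc (a j) (b j)) := measure_mono hE
    _ ≤ ∑ j, volume (Icc (a j) (b j)) := measure_iUnion_fintype_le _ _
    _ ≤ ∑ _j : Fin n, ENNReal.ofReal δ :=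
      Finset.sum_le_sum fun j _ => by rw [Real.volume_Icc]; exact ENNReal.ofReal_le_ofReal (hab j)
    _ = n * ENNReal.ofReal δ := by simp

lemma coverable_Ico_zero_one (hδ : 0 < δ) : Coverable δ ⌈1 / δ⌉₊ (Ico 0 1) := by
  refine ⟨fun j => j * δ, fun j => j * δ + δ, fun j => by simp, fun x hx => ?_⟩
  have hxδ : 0 ≤ x / δ := div_nonneg hx.1 hδ.le
  have hj : ⌊x / δ⌋₊ < ⌈1 / δ⌉₊ := (Nat.floor_lt hxδ).2 <|
    (div_lt_div_of_pos_right hx.2 hδ).trans_le (Nat.le_ceil _)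
  refine mem_iUnion.2 ⟨⟨_, hj⟩, ?_, ?_⟩
  · simpa [← le_div_iff₀ hδ] using Nat.floor_le hxδ
  · have := Nat.lt_floor_add_one (x / δ)
    rw [div_lt_iff₀ hδ] at this
    simp only
    linarith

lemma le_coverNumber_Ico_zero_one (hδ : 0 < δ) (hn : n * δ ≤ 1) :
    n ≤ coverNumber δ (Ico 0 1) := by
  refine le_csInf ⟨_, Nat.ceil_pos.2 (by positivity), coverable_Ico_zero_one hδ⟩
    fun m ⟨_, hm⟩ => ?_
  have h := hm.volume_le
  rw [Real.volume_Ico, sub_zero, ← ENNReal.ofReal_natCast, ← ENNReal.ofReal_mul (by positivity),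
    ENNReal.ofReal_le_ofReal_iff (by positivity)] at h
  exact_mod_cast (mul_le_mul_iff_left₀ hδ).1 (hn.trans h)

end Cover

namespace Strategy

variable {N Y : ℕ} {φ : Strategy N Y} {ε δ : ℝ} {q : Fin N → ℝ}

lemma Accurate.two_le_card_queryIndices_Ioc (hφ : φ.Accurate ε) {z z' : ℝ}
    (hz : z ∈ φ.infoSet q) (hz' : z' ∈ φ.infoSet q) (hzz' : z + 2 * ε < z') :
    2 ≤ #(queryIndices q (Ioc z z')) := by
  obtain ⟨y, -⟩ := hz.2
  have hε := hφ.nonneg y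
  obtain ⟨k, hk⟩ := hφ.exists_query_mem_Ioc hz (by linarith [hz'.1.2])
  obtain ⟨k', hk'⟩ := hφ.exists_query_mem_Icc hz' (by linarith [hz.1.1])
  refine Finset.one_lt_card.2 ⟨k, ?_, k', ?_, fun h => ?_⟩
  · exact mem_queryIndices.2 ⟨hk.1, by linarith [hk.2]⟩
  · exact mem_queryIndices.2 ⟨by linarith [hk'.1, hz.1.1], hk'.2⟩
  · subst h
    linarith [hk.2, hk'.1]

/-- Covering `I(q)` greedily from the left yields points `a < z₀ < ⋯ < z_c` of `I(q)`, each more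
than `2ε` beyond the previous one, with two queries between consecutive ones. -/
theorem Accurate.exists_mem_infoSet_two_mul_le_card (hφ : φ.Accurate ε) (hεδ : 2 * ε < δ) (c : ℕ) :
    ∀ {s : ℕ} {a : ℝ}, Coverable δ s (φ.infoSet q ∩ Iic a) →
      ¬ Coverable δ (s + c) (φ.infoSet q) →
      ∃ z ∈ φ.infoSet q, a < z ∧ 2 * c ≤ #(queryIndices q (Ioi z)) := by
  set S := φ.infoSet q
  induction c with
  | zero =>
    intro s a hs hn
    obtain ⟨z, hzS, hza⟩ := hs.inter_Ioi_nonempty le_rfl hn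
    exact ⟨z, hzS, hza, by simp⟩
  | succ c ih =>
    intro s a hs hn
    have hQ := hs.inter_Ioi_nonempty (Nat.le_add_right s _) hn
    set f := sInf (S ∩ Ioi a)
    have hQbdd : BddBelow (S ∩ Ioi a) := ⟨a, fun x hx => hx.2.le⟩
    obtain ⟨z₀, hz₀, hz₀f⟩ : ∃ z₀ ∈ S ∩ Ioi a, z₀ < f + (δ - 2 * ε) :=
      Real.lt_sInf_add_pos hQ (sub_pos.2 hεδ)
    have hs' : Coverable δ (s + 1) (S ∩ Iic (f + δ)) :=
      (hs.union (coverable_one_Icc f)).mono_set fun x hx =>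
        (le_or_gt x a).imp (fun hxa => ⟨hx.1, hxa⟩) fun hax => ⟨csInf_le hQbdd ⟨hx.1, hax⟩, hx.2⟩
    obtain ⟨z, hzS, hfz, hc⟩ := ih hs' (by rwa [add_right_comm])
    obtain ⟨y, -⟩ := hz₀.1.2
    have hε := hφ.nonneg y
    have h2 := hφ.two_le_card_queryIndices_Ioc hz₀.1 hzS (by linarith)
    have hsum := card_queryIndices_add_card_le (q := q) (Ioc_disjoint_Ioi_same (a := z₀) (b := z))
      (union_subset Ioc_subset_Ioi_self (Ioi_subset_Ioi (by linarith [csInf_le hQbdd hz₀])))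
    exact ⟨z₀, hz₀.1, hz₀.2, by omega⟩

end Strategy

/-- The non-adaptive grid `(k + 1) / (M + 1)`; the estimate, the number of positive responses
over `M + 1`, is the last grid point below `x` (or `0`). -/
noncomputable def gridStrategy (M : ℕ) : Strategy M 1 where
  query k _ _ := ((k : ℕ) + 1) / ((M : ℝ) + 1)
  estimate r _ := #{k | r k = true} / ((M : ℝ) + 1)
  query_mem k _ _ := ⟨by positivity, (div_lt_one (by positivity)).2 (by simp)⟩
  estimate_mem r _ := ⟨by positivity, (div_lt_one (by positivity)).2 <| by
    have := (Finset.card_filter_le Finset.univ fun k => r k = true).trans_eq (Finset.card_fin M)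
    exact_mod_cast Nat.lt_succ_of_le this⟩

lemma gridStrategy_estim (M : ℕ) {x : ℝ} (hx : 0 ≤ x) (y : Fin 1) :
    (gridStrategy M).estim x y = min M ⌊x * (M + 1)⌋₊ / ((M : ℝ) + 1) := by
  have hM : (0 : ℝ) < M + 1 := by positivity
  have hcount : Finset.univ.filter (fun k => (gridStrategy M).resps x y M k = true) =
      Finset.univ.filter (fun k : Fin M => (k : ℕ) < ⌊x * (M + 1)⌋₊) := by
    ext k
    simp only [Finset.mem_filter, Finset.mem_univ, true_and,
      (gridStrategy M).resps_eq_decide le_rfl, decide_eq_true_eq]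
    rw [Nat.lt_iff_add_one_le, Nat.le_floor_iff (by positivity), ← div_le_iff₀ hM]
    simp [Strategy.queries, gridStrategy]
  change (#(Finset.univ.filter fun k => (gridStrategy M).resps x y M k = true) : ℝ) / _ = _
  rw [hcount, Fin.card_filter_val_lt]

lemma gridStrategy_accurate {ε : ℝ} {M : ℕ} (hM : 2 / ε ≤ M + 1) (hε : 0 < ε) :
    (gridStrategy M).Accurate ε := by
  intro x hx y
  have hM1 : (0 : ℝ) < M + 1 := by positivity
  set n := ⌊x * (M + 1)⌋₊
  have hn : (n : ℝ) ≤ x * (M + 1) := Nat.floor_le (by positivity [hx.1])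
  have hn' : x * (M + 1) < n + 1 := Nat.lt_floor_add_one _
  have hnM : n ≤ M := by
    have : (n : ℝ) < M + 1 := hn.trans_lt (by nlinarith [hx.2])
    exact_mod_cast Nat.lt_succ_iff.1 (by exact_mod_cast this)
  have hεM : 2 ≤ (M + 1) * ε := (div_le_iff₀ hε).1 hM
  rw [gridStrategy_estim M hx.1, min_eq_right hnM, div_sub' hM1.ne', abs_div,
    abs_of_pos hM1, div_le_iff₀ hM1, abs_le]
  constructor <;> linarith

lemma gridStrategy_isPrivate {ε δ : ℝ} {L M : ℕ} (hε : 0 < ε) (hδ : 0 < δ) (hLδ : L * δ ≤ 1)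
    (hM : 2 / ε ≤ M + 1) : IsPrivate ε δ L (gridStrategy M) := by
  refine ⟨gridStrategy_accurate hM hε, fun x _ q ⟨y, hq⟩ => ?_⟩
  have : (gridStrategy M).infoSet q = Ico 0 1 := ext fun w => and_iff_left ⟨y, hq⟩
  exact this ▸ le_coverNumber_Ico_zero_one hδ hLδ

lemma ceil_logb_two_le {r : ℝ} (hr : 1 < r) {K : ℤ}
    (h : ∀ m : ℕ, (2 : ℝ) ^ m < r → (m : ℤ) + 1 ≤ K) : ⌈Real.logb 2 r⌉ ≤ K := by
  have hpos : 0 < ⌈Real.logb 2 r⌉ := Int.ceil_pos.2 (Real.logb_pos one_lt_two hr)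
  obtain ⟨m, hm⟩ : ∃ m : ℕ, (m : ℤ) = ⌈Real.logb 2 r⌉ - 1 := ⟨_, Int.toNat_of_nonneg (by omega)⟩
  have hlt : (m : ℝ) < Real.logb 2 r := by
    have := Int.ceil_lt_add_one (Real.logb 2 r)
    have hm' : (m : ℝ) = (⌈Real.logb 2 r⌉ : ℝ) - 1 := by exact_mod_cast hm
    linarith
  have := h m (by simpa using (Real.lt_logb_iff_rpow_lt one_lt_two (by linarith)).1 hlt)
  omega

namespace IsPrivate

variable {N Y L : ℕ} {φ : Strategy N Y} {ε δ : ℝ}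

theorem add_two_mul_le (hφ : IsPrivate ε δ L φ) (hL : 2 ≤ L) (hεδ : 2 * ε < δ) (hδ : δ ≤ 1)
    (y : Fin Y) {m : ℕ} (hm : 2 ^ m * ε < δ) : m + 1 + 2 * (L - 2) ≤ N := by
  obtain ⟨x, hx, hxm⟩ : ∃ x ∈ Ico 0 δ, m < #(queryIndices (φ.queries x y) (Ioo 0 δ)) := by
    by_contra! h
    linarith [hφ.1.sub_le_two_pow_mul y m le_rfl hδ h]
  set q := φ.queries x y
  have hx01 : x ∈ Ico 0 1 := ⟨hx.1, hx.2.trans_le hδ⟩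
  have hlow : Coverable δ 1 (φ.infoSet q ∩ Iic δ) :=
    (coverable_one_Icc 0).mono_set fun z hz => ⟨hz.1.1.1, by simpa using hz.2⟩
  have hhigh : ¬ Coverable δ (1 + (L - 2)) (φ.infoSet q) :=
    not_coverable_of_lt_coverNumber (by omega) (by have := hφ.2 x hx01 q ⟨y, rfl⟩; omega)
  obtain ⟨z, -, hδz, hz⟩ := hφ.1.exists_mem_infoSet_two_mul_le_card hεδ (L - 2) hlow hhigh
  have := card_queryIndices_add_card_le (q := q) (I := Ioo 0 δ) (J := Ioi z) (K := univ)
    (disjoint_left.2 fun w hw hw' => (hw.2.trans hδz).asymm hw') (subset_univ _)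
  have := (queryIndices q univ).card_le_univ.trans_eq (Fintype.card_fin N)
  omega

theorem ceil_logb_add_le (hφ : IsPrivate ε δ L φ) (hL : 2 ≤ L) (hε : 0 < ε) (hεδ : 2 * ε < δ)
    (hδ : δ ≤ 1) (y : Fin Y) : ⌈Real.logb 2 (δ / ε)⌉ + 2 * (L : ℤ) - 4 ≤ N := by
  have := ceil_logb_two_le (K := N - 2 * L + 4) ((one_lt_div hε).2 (by linarith)) fun m hm =>
    by have := hφ.add_two_mul_le hL hεδ hδ y ((lt_div_iff₀ hε).1 hm); omega
  omega

end IsPrivate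

/-- lower bound `N*(ε,δ,L) ≥ ⌈log₂(δ/ε)⌉ + 2L − 4`; indeed every
`(ε,δ,L)`-private strategy (with nonempty seed space) of length `N` satisfies this. -/
theorem private_learning_lower_bound (ε δ : ℝ) (L : ℕ) (hL : 2 ≤ L)
    (hε : 0 < ε) (hδ : 0 < δ) (h1 : 2 * ε < δ) (h2 : δ ≤ 1 / (L : ℝ)) :
    ⌈Real.logb 2 (δ / ε)⌉ + 2 * (L : ℤ) - 4 ≤ (Nstar ε δ L : ℤ) ∧
    ∀ (N Y : ℕ), 0 < Y → ∀ φ : Strategy N Y, IsPrivate ε δ L φ →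
      ⌈Real.logb 2 (δ / ε)⌉ + 2 * (L : ℤ) - 4 ≤ (N : ℤ) := by
  have hL' : (2 : ℝ) ≤ L := by exact_mod_cast hL
  have hLδ : L * δ ≤ 1 := by rwa [le_div_iff₀ (by positivity), mul_comm] at h2
  have hδ1 : δ ≤ 1 := by nlinarith
  have hbound : ∀ (N Y : ℕ), 0 < Y → ∀ φ : Strategy N Y, IsPrivate ε δ L φ →
      ⌈Real.logb 2 (δ / ε)⌉ + 2 * (L : ℤ) - 4 ≤ (N : ℤ) := fun N Y hY φ hφ =>
    hφ.ceil_logb_add_le hL hε h1 hδ1 ⟨0, hY⟩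
  obtain ⟨Y, hY, φ, hφ⟩ : Nstar ε δ L ∈ {N | ∃ Y, 0 < Y ∧ ∃ φ : Strategy N Y, IsPrivate ε δ L φ} :=
    Nat.sInf_mem ⟨⌈2 / ε⌉₊, 1, one_pos, gridStrategy _,
      gridStrategy_isPrivate hε hδ hLδ (by linarith [Nat.le_ceil (2 / ε)])⟩
  exact ⟨hbound _ Y hY φ hφ, hbound⟩
end

section
/- Let ε > 0 and let φ be a learner strategy of length N satisfying the accuracy constraint with parameter ε. Then for every x ∈ [0,1) and every q̄ ∈ Q(x), the information set I(q̄) is contained in the union of the special intervals of q̄; in particular, every element of I(q̄) lies in some interval [q^i, q^{i+1}) between consecutive sorted augmented queries of q̄ whose length is at most ε. -/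
open Set

namespace Strategy

variable {N Y : ℕ}

theorem resps_eq_of_forall_queries_le_iff (φ : Strategy N Y) {x x' : ℝ} {y : Fin Y}
    (h : ∀ k, φ.queries x y k ≤ x ↔ φ.queries x y k ≤ x') (k : ℕ) :
    φ.resps x' y k = φ.resps x y k := by
  induction k with
  | zero => funext i; exact i.elim0
  | succ k ih =>
    funext i
    simp only [resps]
    split_ifs with hik hk
    · rw [ih]
    · rw [ih, decide_eq_decide]
      exact (h ⟨k, hk⟩).symm
    · rfl

theorem estim_eq_of_forall_queries_le_iff (φ : Strategy N Y) {x x' : ℝ} {y : Fin Y}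
    (h : ∀ k, φ.queries x y k ≤ x ↔ φ.queries x y k ≤ x') :
    φ.estim x' y = φ.estim x y := by
  rw [estim, estim, φ.resps_eq_of_forall_queries_le_iff h]

end Strategy

theorem le_iff_le_of_mem_Ico {α : Type*} [LinearOrder α] {a b c x x' : α}
    (hc : c ≤ a ∨ b ≤ c) (hx : x ∈ Ico a b) (hx' : x' ∈ Ico a b) : c ≤ x ↔ c ≤ x' := by
  rcases hc with hca | hbc
  · exact iff_of_true (hca.trans hx.1) (hca.trans hx'.1)
  · exact iff_of_false (not_le.2 (hx.2.trans_le hbc)) (not_le.2 (hx'.2.trans_le hbc))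

theorem Set.Finite.exists_consecutive_le_lt {α : Type*} [LinearOrder α] {s : Set α}
    (hs : s.Finite) {z : α} (hlow : ∃ c ∈ s, c ≤ z) (hhigh : ∃ c ∈ s, z < c) :
    ∃ a ∈ s, ∃ b ∈ s, a ≤ z ∧ z < b ∧ ∀ c ∈ s, c ≤ a ∨ b ≤ c := by
  obtain ⟨a, ⟨has, haz⟩, ha_max⟩ :=
    (s ∩ Iic z).exists_max_image id (hs.inter_of_left _) (by simpa [Set.Nonempty] using hlow)
  obtain ⟨b, ⟨hbs, hzb⟩, hb_min⟩ :=
    (s ∩ Ioi z).exists_min_image id (hs.inter_of_left _) (by simpa [Set.Nonempty] using hhigh)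
  refine ⟨a, has, b, hbs, haz, hzb, fun c hc => ?_⟩
  rcases le_or_gt c z with hcz | hzc
  · exact Or.inl (ha_max c ⟨hc, hcz⟩)
  · exact Or.inr (hb_min c ⟨hc, hzc⟩)

theorem sub_le_of_forall_mem_Ico_abs_sub_le {a b e r : ℝ} (hab : a < b)
    (h : ∀ x ∈ Ico a b, |e - x| ≤ r) : b - a ≤ 2 * r := by
  have hea : e - r ≤ a := by linarith [(abs_le.1 (h a ⟨le_rfl, hab⟩)).2]
  have hbe : b ≤ e + r := by
    rw [← csSup_Ico hab]
    exact csSup_le (nonempty_Ico.2 hab) fun x hx => by linarith [(abs_le.1 (h x hx)).1]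
  linarith

theorem infoSet_subset_special_intervals_general {N Y : ℕ} (ε : ℝ)
    (φ : Strategy N Y) (hacc : φ.Accurate ε) :
    ∀ x ∈ Set.Ico (0 : ℝ) 1, ∀ q ∈ φ.Q x, ∀ z ∈ φ.infoSet q,
      ∃ a ∈ insert (0 : ℝ) (insert 1 (Set.range q)),
      ∃ b ∈ insert (0 : ℝ) (insert 1 (Set.range q)),
        a ≤ z ∧ z < b ∧ b - a ≤ ε ∧
        ∀ c ∈ insert (0 : ℝ) (insert 1 (Set.range q)), c ≤ a ∨ b ≤ c := by
  rintro - - q - z ⟨hz, y, rfl⟩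
  have hfin : (insert (0 : ℝ) (insert 1 (Set.range (φ.queries z y)))).Finite :=
    ((Set.finite_range _).insert 1).insert 0
  obtain ⟨a, ha, b, hb, haz, hzb, hgap⟩ :=
    hfin.exists_consecutive_le_lt ⟨0, by simp, hz.1⟩ ⟨1, by simp, hz.2⟩
  refine ⟨a, ha, b, hb, haz, hzb, ?_, hgap⟩
  have ha0 : 0 ≤ a := (hgap 0 (by simp)).resolve_right (by linarith [hz.1])
  have hb1 : b ≤ 1 := (hgap 1 (by simp)).resolve_left (by linarith [hz.2])
  -- on the gap `[a, b)` the learner sees the same responses as for `z`, so it outputs one estimate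
  have hest : ∀ x ∈ Ico a b, φ.estim x y = φ.estim z y := fun x hx =>
    φ.estim_eq_of_forall_queries_le_iff fun k =>
      le_iff_le_of_mem_Ico (hgap _ (by simp)) ⟨haz, hzb⟩ hx
  have hclose : ∀ x ∈ Ico a b, |φ.estim z y - x| ≤ ε / 2 := fun x hx =>
    hest x hx ▸ hacc x ⟨ha0.trans hx.1, hx.2.trans_le hb1⟩ y
  linarith [sub_le_of_forall_mem_Ico_abs_sub_le (haz.trans_lt hzb) hclose]

/-- for an accurate strategy, the information set `I(q̄)` is contained in the
union of the special intervals of `q̄`: every `z ∈ I(q̄)` lies in an interval `[a, b)`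
between consecutive values of the augmented query set `{0, 1} ∪ {q_k}` with `b − a ≤ ε`. -/
theorem infoSet_subset_special_intervals {N Y : ℕ} (ε : ℝ) (hε : 0 < ε)
    (φ : Strategy N Y) (hacc : φ.Accurate ε) :
    ∀ x ∈ Set.Ico (0 : ℝ) 1, ∀ q ∈ φ.Q x, ∀ z ∈ φ.infoSet q,
      ∃ a ∈ insert (0 : ℝ) (insert 1 (Set.range q)),
      ∃ b ∈ insert (0 : ℝ) (insert 1 (Set.range q)),
        a ≤ z ∧ z < b ∧ b - a ≤ ε ∧
        ∀ c ∈ insert (0 : ℝ) (insert 1 (Set.range q)), c ≤ a ∨ b ≤ c :=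
  infoSet_subset_special_intervals_general ε φ hacc
end
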